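/- arXiv:1912.05770 — 2 statements merged into one kernel-verified Lean document; each statement's English description precedes it below -/
import Mathlib

section
/- Let $\mathcal{F}(t)$, $t \in [T]$, be distributions on values, and for $x \in \Delta_T$ let $\mathcal{F}(x)$ denote the mixture. Suppose each $\mathcal{F}(t)$ satisfies $R(t) \ge \frac{1}{e} \mathbf{E}_{v \sim \mathcal{F}(t)}[v]$, where $R(t)$ is the monopoly (optimal posted-price) revenue of $\mathcal{F}(t)$. Then the monopoly revenue $R(x)$ of the mixture satisfies $R(x) \ge \frac{1}{eT} \mathbf{E}_{v \sim \mathcal{F}(x)}[v]$. -/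
open Finset

/-- Revenue of posting price `p` against a distribution `f` over values `val`. -/
noncomputable def postedRev {V : ℕ} (val : Fin V → ℝ) (f : Fin V → ℝ) (p : ℝ) : ℝ :=
  p * ∑ k ∈ Finset.univ.filter (fun k => p ≤ val k), f k

/-- Lemma 11: if each type distribution has monopoly revenue at
least `1/e` of its expected value, then the monopoly revenue of any mixture of
`T` types is at least `1/(eT)` of the mixture's expected value. -/
theorem stmt_10 (T V : ℕ) (hT : 0 < T) (hV : 0 < V)
    (val : Fin V → ℝ) (hval : ∀ k, val k ∈ Set.Ioc (0:ℝ) 1)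
    (f : Fin T → Fin V → ℝ)
    (hf0 : ∀ t k, 0 ≤ f t k) (hf1 : ∀ t, ∑ k, f t k = 1)
    (x : Fin T → ℝ) (hx0 : ∀ t, 0 ≤ x t) (hx1 : ∑ t, x t = 1)
    (R : Fin T → ℝ)
    (hR : ∀ t, IsGreatest {r | ∃ k, r = postedRev val (f t) (val k)} (R t))
    (hratio : ∀ t, (1 / Real.exp 1) * ∑ k, f t k * val k ≤ R t)
    (Rx : ℝ)
    (hRx : IsGreatest {r | ∃ k, r = postedRev val (fun k => ∑ t, x t * f t k) (val k)} Rx) :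
    (1 / (Real.exp 1 * T)) * ∑ k, (∑ t, x t * f t k) * val k ≤ Rx := by
  have hTpos : (0:ℝ) < T := by exact_mod_cast hT
  -- each type's scaled revenue is at most Rx
  have key : ∀ t, x t * R t ≤ Rx := by
    intro t
    obtain ⟨k, hk⟩ := (hR t).1
    have h2 : postedRev val (fun k => ∑ t, x t * f t k) (val k) ≤ Rx :=
      hRx.2 ⟨k, rfl⟩
    refine le_trans ?_ h2
    rw [hk, postedRev, postedRev]
    have hv : 0 ≤ val k := (hval k).1.le
    rw [mul_left_comm]
    apply mul_le_mul_of_nonneg_left _ hv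
    rw [Finset.mul_sum]
    apply Finset.sum_le_sum
    intro i _
    exact Finset.single_le_sum (f := fun t' => x t' * f t' i)
      (fun t' _ => mul_nonneg (hx0 t') (hf0 t' i)) (Finset.mem_univ t)
  have hsum : ∑ t, x t * R t ≤ T * Rx := by
    calc ∑ t, x t * R t ≤ ∑ _t : Fin T, Rx := Finset.sum_le_sum fun t _ => key t
    _ = T * Rx := by simp [Finset.sum_const, nsmul_eq_mul]
  -- swap sums
  have hswap : ∑ k, (∑ t, x t * f t k) * val k = ∑ t, x t * ∑ k, f t k * val k := by
    simp only [Finset.sum_mul, Finset.mul_sum]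
    rw [Finset.sum_comm]
    apply Finset.sum_congr rfl; intro t _
    apply Finset.sum_congr rfl; intro k _; ring
  have hmid : (1 / Real.exp 1) * ∑ k, (∑ t, x t * f t k) * val k ≤ T * Rx := by
    rw [hswap, Finset.mul_sum]
    refine le_trans (Finset.sum_le_sum fun t _ => ?_) hsum
    rw [mul_left_comm]
    exact mul_le_mul_of_nonneg_left (hratio t) (hx0 t)
  have hfinal : (1:ℝ) / (Real.exp 1 * T) = (1 / T) * (1 / Real.exp 1) := by
    rw [one_div, mul_inv_rev, one_div, one_div]
  rw [hfinal, mul_assoc]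
  calc (1 / (T:ℝ)) * ((1 / Real.exp 1) * ∑ k, (∑ t, x t * f t k) * val k)
      ≤ (1 / T) * (T * Rx) := by
        apply mul_le_mul_of_nonneg_left hmid (by positivity)
    _ = Rx := by field_simp
end

section
/- Let $\mathcal{F}$ be a distribution over values in $(0,1]$ whose revenue curve in quantile space is concave with monopoly price $p^*$, quantile $q^*$, and satisfies the strong concavity condition: for any price $p'$ with quantile $q'$, $\mathrm{Rev}(p', \mathcal{F}) \le (1 - \frac{1}{4}(q^* - q')^2)\mathrm{Rev}(p^*, \mathcal{F})$. If two prices $p_1 < p_2$ both exceed $p^*$ (so their quantiles satisfy $q_2 \le q_1 \le q^*$) and $q_1 - q_2 \ge \gamma$, then $\mathrm{Rev}(p_1, \mathcal{F}) - \mathrm{Rev}(p_2, \mathcal{F}) \ge \frac{1}{4}\gamma^2 \cdot \mathrm{Rev}(p^*, \mathcal{F})$. -/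
/-!
Concavity bounds the chord slope of `R` on `[q₂, q₁]` below by its slope on `[q₂, q*]`, so
`R q₁ - R q₂ ≥ (q₁ - q₂) / (q* - q₂) · (R q* - R q₂)`, and strong concavity at `q₂` gives
`R q* - R q₂ ≥ (q* - q₂)² / 4 · R q*`. Together `R q₁ - R q₂ ≥ (q₁ - q₂)(q* - q₂) / 4 · R q*`,
and `(q₁ - q₂)(q* - q₂) ≥ (q₁ - q₂)² ≥ γ²`.
-/

namespace ConcaveOn

variable {s : Set ℝ} {f : ℝ → ℝ} {a x y : ℝ}

theorem mul_sub_le_mul_sub (hf : ConcaveOn ℝ s f) (ha : a ∈ s) (hy : y ∈ s)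
    (hax : a ≤ x) (hxy : x ≤ y) : (x - a) * (f y - f a) ≤ (y - a) * (f x - f a) := by
  rcases hax.eq_or_lt with rfl | hax
  · simp
  rcases hxy.eq_or_lt with rfl | hxy
  · rfl
  have hchord := hf.neg.secant_mono_aux1 ha hy hax hxy
  simp only [Pi.neg_apply] at hchord
  linarith

theorem mul_mul_le_sub_of_mul_sq_le_sub (hf : ConcaveOn ℝ s f) (ha : a ∈ s) (hy : y ∈ s)
    (hax : a ≤ x) (hxy : x ≤ y) {c : ℝ} (hgap : c * (y - a) ^ 2 ≤ f y - f a) :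
    c * ((x - a) * (y - a)) ≤ f x - f a := by
  rcases (hax.trans hxy).eq_or_lt with rfl | hay
  · obtain rfl : x = a := le_antisymm hxy hax
    simp
  have hchord := hf.mul_sub_le_mul_sub ha hy hax hxy
  have hscaled := mul_le_mul_of_nonneg_left hgap (sub_nonneg.2 hax)
  refine le_of_mul_le_mul_left ?_ (sub_pos.2 hay)
  linarith

end ConcaveOn

/-- for a concave revenue curve (in quantile space) with monopoly
quantile `q*` and the strong concavity property, two quantiles `q2 ≤ q1 ≤ q*`
with gap at least `γ` have revenue gap at least `(γ²/4)·R(q*)`. -/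
theorem stmt_18 (R : ℝ → ℝ) (hR0 : R 0 = 0)
    (hconc : ConcaveOn ℝ (Set.Icc (0:ℝ) 1) R)
    (qstar : ℝ) (hqs : qstar ∈ Set.Icc (0:ℝ) 1)
    (hmax : ∀ q ∈ Set.Icc (0:ℝ) 1, R q ≤ R qstar)
    (hstrong : ∀ q ∈ Set.Icc (0:ℝ) 1, R q ≤ (1 - (qstar - q) ^ 2 / 4) * R qstar)
    (q1 q2 γ : ℝ) (h20 : 0 ≤ q2) (h21 : q2 ≤ q1) (h1s : q1 ≤ qstar)
    (hγ0 : 0 ≤ γ) (hγ : γ ≤ q1 - q2) :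
    γ ^ 2 / 4 * R qstar ≤ R q1 - R q2 := by
  have hq2 : q2 ∈ Set.Icc (0:ℝ) 1 := ⟨h20, by linarith [hqs.2]⟩
  have hRstar : 0 ≤ R qstar := hR0 ▸ hmax 0 ⟨le_rfl, zero_le_one⟩
  have hgap : R qstar / 4 * (qstar - q2) ^ 2 ≤ R qstar - R q2 := by
    linarith [hstrong q2 hq2]
  have hγ2 : γ ^ 2 ≤ (q1 - q2) * (qstar - q2) := by nlinarith
  calc γ ^ 2 / 4 * R qstar ≤ R qstar / 4 * ((q1 - q2) * (qstar - q2)) := by nlinarith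
    _ ≤ R q1 - R q2 := hconc.mul_mul_le_sub_of_mul_sq_le_sub hq2 hqs h21 h1s hgap
end
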